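/- arXiv:2412.02049 — 5 statements merged into one kernel-verified Lean document; each statement's English description precedes it below -/
import Mathlib

section
/- For every positive integer x and every natural number n ≥ 1, the integer ⋆^n x (the n-th compositional iterate of ⋆ applied to x) has at least n distinct prime factors. -/
/-! Since `y` and `y + 1` are coprime, the prime factors of `y * (y + 1)` are those of `y` together
with those of `y + 1`, and the latter set is nonempty when `y > 0`. So every application of `⋆` to
a positive number adds at least one new prime factor, and positivity is preserved. -/

namespace Nat

lemma Coprime.card_primeFactors_mul {a b : ℕ} (hab : Coprime a b) :
    (a * b).primeFactors.card = a.primeFactors.card + b.primeFactors.card := by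
  rw [hab.primeFactors_mul, Finset.card_union_of_disjoint hab.disjoint_primeFactors]

lemma card_primeFactors_lt_mul_succ {y : ℕ} (hy : 0 < y) :
    y.primeFactors.card < (y * (y + 1)).primeFactors.card := by
  have hcop : Coprime y (y + 1) := by simp
  have hnonempty : (y + 1).primeFactors.Nonempty := nonempty_primeFactors.mpr (by omega)
  rw [hcop.card_primeFactors_mul]
  exact Nat.lt_add_of_pos_right hnonempty.card_pos

end Nat

theorem star_iterate_primeFactors_general (x n : ℕ) (hx : 0 < x) :
    n ≤ ((fun y => y * (y + 1))^[n] x).primeFactors.card := by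
  have hpos : Set.MapsTo (fun y : ℕ => y * (y + 1)) {y | 0 < y} {y | 0 < y} :=
    fun y (hy : 0 < y) => Nat.mul_pos hy (Nat.succ_pos y)
  induction n with
  | zero => exact Nat.zero_le _
  | succ k ih =>
    rw [Function.iterate_succ_apply']
    exact ih.trans_lt (Nat.card_primeFactors_lt_mul_succ (hpos.iterate k hx))

theorem star_iterate_primeFactors (x n : ℕ) (hx : 0 < x) (hn : 1 ≤ n) :
    n ≤ ((fun y => y * (y + 1))^[n] x).primeFactors.card :=
  star_iterate_primeFactors_general x n hx
end

section
/- For every pair of coprime positive integers n and d and every positive integer k, there exists a partition of the set {m ∈ ℕ : m ≥ kd} into countably many pairwise disjoint finite sets X_u such that for each u the sum of reciprocals of elements of X_u equals n/d. -/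
/-!
The blocks are built greedily: at each step take the least integer `m ≥ kd` not used yet and
complete `1/m` to `n/d` by distinct unit fractions whose denominators exceed everything used so
far. Such an Egyptian fraction exists for every nonnegative rational and every lower bound: a
block of the divergent harmonic series brings the remainder below the next unit fraction, and the
Fibonacci–Sylvester greedy algorithm, which strictly lowers the numerator, finishes the job.
Since the least unused integer increases at every step, every integer `≥ kd` is eventually used.
-/

open Finset

section FibonacciSylvester

variable {r : ℚ}

lemma natCast_ceil_inv_pos (hr : 0 < r) : (0 : ℚ) < ⌈r⁻¹⌉₊ :=
  (inv_pos.2 hr).trans_le (Nat.le_ceil _)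

lemma one_div_ceil_inv_le (hr : 0 < r) : 1 / (⌈r⁻¹⌉₊ : ℚ) ≤ r := by
  rw [one_div_le (natCast_ceil_inv_pos hr) hr, one_div]
  exact Nat.le_ceil _

lemma sub_one_div_ceil_inv_lt (hr : 0 < r) (hr₁ : r < 1) :
    r - 1 / (⌈r⁻¹⌉₊ : ℚ) < 1 / ⌈r⁻¹⌉₊ := by
  have hm := natCast_ceil_inv_pos hr
  have hlt : (⌈r⁻¹⌉₊ : ℚ) < r⁻¹ + 1 := Nat.ceil_lt_add_one (inv_pos.2 hr).le
  have : r * ⌈r⁻¹⌉₊ < 2 := by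
    calc r * ⌈r⁻¹⌉₊ < r * (r⁻¹ + 1) := mul_lt_mul_of_pos_left hlt hr
      _ = 1 + r := by field_simp
      _ < 2 := by linarith
  rw [sub_lt_iff_lt_add, ← add_div, lt_div_iff₀ hm]
  linarith

lemma num_sub_one_div_ceil_inv_lt (hr : 0 < r) : (r - 1 / (⌈r⁻¹⌉₊ : ℚ)).num < r.num := by
  set m := ⌈r⁻¹⌉₊
  have hm : (0 : ℚ) < m := natCast_ceil_inv_pos hr
  have hs : 0 ≤ r - 1 / (m : ℚ) := sub_nonneg.2 (one_div_ceil_inv_le hr)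
  have hden : ((r - 1 / (m : ℚ)).den : ℚ) ≤ r.den * m := by
    have hm_den : (1 / (m : ℚ)).den = m := by
      rw [one_div, Rat.inv_natCast_den_of_pos (by exact_mod_cast hm)]
    have := Rat.sub_den_dvd r (1 / (m : ℚ))
    rw [hm_den] at this
    exact_mod_cast Nat.le_of_dvd (by positivity) this
  have hr_m : r * (m - 1) < 1 := by
    have hlt : (m : ℚ) < r⁻¹ + 1 := Nat.ceil_lt_add_one (inv_pos.2 hr).le
    calc r * (m - 1) < r * r⁻¹ := mul_lt_mul_of_pos_left (by linarith) hr
      _ = 1 := mul_inv_cancel₀ hr.ne'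
  have hd : (0 : ℚ) < r.den := by positivity
  have : ((r - 1 / (m : ℚ)).num : ℚ) < r.num := by
    calc ((r - 1 / (m : ℚ)).num : ℚ) = (r - 1 / m) * (r - 1 / (m : ℚ)).den :=
          (Rat.mul_den_eq_num _).symm
      _ ≤ (r - 1 / m) * (r.den * m) := mul_le_mul_of_nonneg_left hden hs
      _ = r.den * (r * m - 1) := by field_simp
      _ < r.den * r := by nlinarith
      _ = r.num := Rat.den_mul_eq_num r
  exact_mod_cast this

lemma exists_sum_one_div_eq_of_lt_one_div (hr : 0 ≤ r) {M : ℕ} (hrM : r < 1 / M) :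
    ∃ S : Finset ℕ, (∀ x ∈ S, M < x) ∧ ∑ x ∈ S, (1 : ℚ) / x = r := by
  induction hn : r.num.toNat using Nat.strong_induction_on generalizing r M with
  | _ n ih =>
  obtain rfl | hr := hr.eq_or_lt
  · exact ⟨∅, by simp, by simp⟩
  set m := ⌈r⁻¹⌉₊
  have hM : 1 ≤ M := by
    by_contra! h
    simp only [Nat.lt_one_iff.1 h, Nat.cast_zero, div_zero] at hrM
    exact hr.not_gt hrM
  have hMm : M < m := by
    have : (M : ℚ) < r⁻¹ := by
      rwa [lt_inv_comm₀ (by positivity) hr, ← one_div]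
    exact_mod_cast this.trans_le (Nat.le_ceil _)
  have hr₁ : r < 1 := hrM.trans_le (div_le_self zero_le_one (by exact_mod_cast hM))
  have hnum : (r - 1 / (m : ℚ)).num < r.num := num_sub_one_div_ceil_inv_lt hr
  have hs : 0 ≤ r - 1 / (m : ℚ) := sub_nonneg.2 (one_div_ceil_inv_le hr)
  have hnum₀ : 0 ≤ (r - 1 / (m : ℚ)).num := Rat.num_nonneg.2 hs
  obtain ⟨S, hSm, hS⟩ := ih (r - 1 / (m : ℚ)).num.toNat (by omega) hs
    (sub_one_div_ceil_inv_lt hr hr₁) rfl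
  have hmS : m ∉ S := fun h => (hSm m h).false
  refine ⟨insert m S, ?_, ?_⟩
  · simp only [mem_insert, forall_eq_or_imp]
    exact ⟨hMm, fun x hx => hMm.trans (hSm x hx)⟩
  · rw [sum_insert hmS, hS]
    ring

end FibonacciSylvester

lemma exists_lt_sum_Ioc_one_div (q : ℚ) (N : ℕ) : ∃ M, q < ∑ x ∈ Ioc N M, (1 : ℚ) / x := by
  have hdiv : Filter.Tendsto (fun M => ∑ x ∈ range (M + 1), ((x : ℝ))⁻¹) Filter.atTop
      Filter.atTop :=
    ((not_summable_iff_tendsto_nat_atTop_of_nonneg fun _ => by positivity).1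
      Real.not_summable_natCast_inv).comp (Filter.tendsto_add_atTop_nat 1)
  obtain ⟨M, hM, hNM⟩ := ((hdiv.eventually_gt_atTop (q + ∑ x ∈ range (N + 1), (x : ℝ)⁻¹)).and
    (Filter.eventually_ge_atTop N)).exists
  refine ⟨M, ?_⟩
  have hIoc : ∑ x ∈ Ioc N M, (x : ℝ)⁻¹
      = ∑ x ∈ range (M + 1), (x : ℝ)⁻¹ - ∑ x ∈ range (N + 1), (x : ℝ)⁻¹ := by
    rw [← Finset.sum_Ico_eq_sub _ (by omega), Finset.Ico_add_one_add_one_eq_Ioc]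
  have : (q : ℝ) < ((∑ x ∈ Ioc N M, (1 : ℚ) / x : ℚ) : ℝ) := by
    push_cast
    simp only [one_div, hIoc]
    linarith
  exact_mod_cast this

lemma exists_sum_one_div_eq {q : ℚ} (hq : 0 ≤ q) (N : ℕ) :
    ∃ S : Finset ℕ, (∀ x ∈ S, N < x) ∧ ∑ x ∈ S, (1 : ℚ) / x = q := by
  obtain ⟨M, hM⟩ := exists_lt_sum_Ioc_one_div q N
  induction M with
  | zero => simp [hq.not_gt] at hM
  | succ M ih =>
    by_cases hlt : q < ∑ x ∈ Ioc N M, (1 : ℚ) / x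
    · exact ih hlt
    rw [not_lt] at hlt
    obtain hNM | hMN := le_or_gt N M
    swap
    · simp [Ioc_eq_empty_of_le (show M + 1 ≤ N by omega), hq.not_gt] at hM
    rw [sum_Ioc_succ_top hNM] at hM
    obtain ⟨S, hSM, hS⟩ := exists_sum_one_div_eq_of_lt_one_div (sub_nonneg.2 hlt)
      (M := M + 1) (by push_cast at hM ⊢; linarith)
    have hdisj : Disjoint (Ioc N M) S := disjoint_left.2 fun x hx hxS => by
      have := (mem_Ioc.1 hx).2; have := hSM x hxS; omega
    refine ⟨Ioc N M ∪ S, fun x hx => ?_, ?_⟩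
    · rcases mem_union.1 hx with hx | hx
      · exact (mem_Ioc.1 hx).1
      · have := hSM x hx; omega
    · rw [sum_union hdisj, hS]
      ring

def coveredBy (F : Finset ℕ → Finset ℕ) : ℕ → Finset ℕ
  | 0 => ∅
  | u + 1 => coveredBy F u ∪ F (coveredBy F u)

lemma exists_partition_of_exists_block {S : Set ℕ} {P : Finset ℕ → Prop}
    (h : ∀ U : Finset ℕ, ∃ Y : Finset ℕ, sInf (S \ U) ∈ Y ∧ ↑Y ⊆ S \ ↑U ∧ P Y) :
    ∃ X : ℕ → Finset ℕ, (∀ u, (X u).Nonempty) ∧ (Pairwise fun u v => Disjoint (X u) (X v)) ∧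
      ⋃ u, (X u : Set ℕ) = S ∧ ∀ u, P (X u) := by
  choose F hmin hsub hP using h
  set C := coveredBy F
  have hC_succ (u : ℕ) : C (u + 1) = C u ∪ F (C u) := rfl
  have hC_mono : Monotone C :=
    monotone_nat_of_le_succ fun u => by rw [hC_succ]; exact subset_union_left
  have hF_sub {u v : ℕ} (huv : u < v) : F (C u) ⊆ C v :=
    (hC_succ u ▸ subset_union_right).trans (hC_mono huv)
  have hF_disj (U : Finset ℕ) : Disjoint (F U) U := by
    rw [← disjoint_coe]; exact Set.disjoint_of_subset_left (hsub U) Set.disjoint_sdiff_left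
  refine ⟨fun u => F (C u), fun u => ⟨_, hmin _⟩, ?_, ?_, fun u => hP _⟩
  · exact (pairwise_disjoint_on _).2 fun u v huv => (hF_disj (C v)).symm.mono_left (hF_sub huv)
  refine (Set.iUnion_subset fun u => (hsub _).trans Set.sdiff_subset).antisymm fun x hx => ?_
  by_contra hx'
  simp only [Set.mem_iUnion, mem_coe, not_exists] at hx'
  have hxC (u : ℕ) : x ∉ C u := by
    induction u with
    | zero => simp [C, coveredBy]
    | succ u ih => rw [hC_succ, mem_union]; exact fun h => h.elim ih (hx' u)
  -- the least uncovered element strictly increases, so it eventually passes `x`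
  have hmono : StrictMono fun u => sInf (S \ C u) := by
    refine strictMono_nat_of_lt_succ fun u => lt_of_le_of_ne ?_ fun heq => ?_
    · exact Nat.sInf_le (Set.sdiff_subset_sdiff_right (by exact_mod_cast hC_mono u.le_succ)
        (hsub _ (hmin _)))
    · exact disjoint_left.1 (hF_disj (C (u + 1))) (hmin _) (heq ▸ hF_sub u.lt_succ_self (hmin _))
  have := (hmono.id_le (x + 1)).trans (Nat.sInf_le ⟨hx, hxC (x + 1)⟩)
  simp at this

lemma exists_block_sum_one_div_eq {q : ℚ} {c : ℕ} (hc : 0 < c) (hcq : 1 / (c : ℚ) ≤ q)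
    (U : Finset ℕ) : ∃ Y : Finset ℕ, sInf (Set.Ici c \ U) ∈ Y ∧ ↑Y ⊆ Set.Ici c \ ↑U ∧
      ∑ x ∈ Y, (1 : ℚ) / x = q := by
  set m := sInf (Set.Ici c \ U)
  have hm : m ∈ Set.Ici c \ U :=
    Nat.sInf_mem ((Set.Ici_infinite c).sdiff U.finite_toSet).nonempty
  have hcm : c ≤ m := hm.1
  have hmq : 1 / (m : ℚ) ≤ q :=
    (one_div_le_one_div_of_le (by exact_mod_cast hc) (by exact_mod_cast hcm)).trans hcq
  obtain ⟨S, hS, hsum⟩ := exists_sum_one_div_eq (sub_nonneg.2 hmq) (max m (U.sup id))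
  have hmS : m ∉ S := fun h => by have := hS m h; omega
  refine ⟨insert m S, mem_insert_self m S, ?_, by rw [sum_insert hmS, hsum]; ring⟩
  rw [coe_insert, Set.insert_subset_iff]
  refine ⟨hm, fun x hx => ⟨?_, fun hxU => ?_⟩⟩
  · have := hS x hx; simp only [Set.mem_Ici]; omega
  · have := hS x hx; have := le_sup (f := id) hxU; simp only [id] at this; omega

theorem partition_into_finite_sets_general (n d k : ℕ) (hn : 0 < n) (hd : 0 < d) (hk : 0 < k) :
    ∃ X : ℕ → Finset ℕ,
      (∀ u, (X u).Nonempty) ∧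
      (Pairwise fun u v => Disjoint (X u) (X v)) ∧
      (⋃ u, (X u : Set ℕ)) = {m : ℕ | k * d ≤ m} ∧
      ∀ u, (∑ x ∈ X u, (1 : ℚ) / x) = n / d := by
  have hkd : 1 / ((k * d : ℕ) : ℚ) ≤ n / d := by
    calc 1 / ((k * d : ℕ) : ℚ) ≤ 1 / d := one_div_le_one_div_of_le (by exact_mod_cast hd)
          (by exact_mod_cast Nat.le_mul_of_pos_left d hk)
      _ ≤ n / d := div_le_div_of_nonneg_right (by exact_mod_cast hn) (by positivity)
  exact exists_partition_of_exists_block (exists_block_sum_one_div_eq (Nat.mul_pos hk hd) hkd)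

theorem partition_into_finite_sets (n d k : ℕ) (hn : 0 < n) (hd : 0 < d) (hk : 0 < k)
    (hcop : Nat.Coprime n d) :
    ∃ X : ℕ → Finset ℕ,
      (∀ u, (X u).Nonempty) ∧
      (Pairwise fun u v => Disjoint (X u) (X v)) ∧
      (⋃ u, (X u : Set ℕ)) = {m : ℕ | k * d ≤ m} ∧
      ∀ u, (∑ x ∈ X u, (1 : ℚ) / x) = n / d :=
  partition_into_finite_sets_general n d k hn hd hk
end

section
/- For every pair of coprime positive integers n and d and every positive integer k, there exists a partition of the set {m ∈ ℕ : m ≥ 2kd} into countably many pairwise disjoint infinite sets Y_j such that for each j the sum of reciprocals of elements of Y_j converges to n/d. -/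
/-!
Split the numbers `m ≥ 2kd` according to their `2`-adic valuation: each class contains a residue
class modulo a power of `2` (up to finitely many terms), so its harmonic series diverges. The sets
`Y₀, Y₁, …` are built one after the other: `Yⱼ` takes the least number not used so far, and is
completed by running the greedy algorithm for the remaining target inside the unused part of the
`j`-th class. Taking the least unused number covers everything; since every earlier `Yᵢ` meets
the `j`-th class in at most one number, the unused part of the class still diverges.
-/

open Set Filter Topology Function

theorem not_summable_indicator_diff {α G : Type*} [AddCommGroup G] [TopologicalSpace G]
    [IsTopologicalAddGroup G] {f : α → G} {A F : Set α} (hA : ¬ Summable (A.indicator f))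
    (hF : (A ∩ F).Finite) : ¬ Summable ((A \ F).indicator f) := by
  intro h
  refine hA (hF.summable_compl_iff.mp ?_)
  rw [summable_subtype_iff_indicator, indicator_indicator]
  rwa [show (A ∩ F)ᶜ ∩ A = A \ F by
    ext; simp only [mem_inter_iff, mem_compl_iff, Set.mem_sdiff]; tauto]

theorem HasSum.indicator_insert {α M : Type*} [AddCommMonoid M] [TopologicalSpace M]
    [ContinuousAdd M] {f : α → M} {s : Set α} {a : α} {x : M} (ha : a ∉ s)
    (h : HasSum (s.indicator f) x) : HasSum ((insert a s).indicator f) (f a + x) := by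
  have hsingle : HasSum (({a} : Set α).indicator f) (f a) := by
    simpa using hasSum_single (f := ({a} : Set α).indicator f) a
      (fun b hb => indicator_of_notMem (mem_singleton_iff.not.2 hb) f)
  rw [insert_eq, indicator_union_of_disjoint (disjoint_singleton_left.2 ha)]
  exact hsingle.add h

section Greedy

variable (A : Set ℕ) (f : ℕ → ℝ) (t : ℝ)

/-- What the greedy algorithm for `t` leaves of `t` after scanning `0, …, m - 1`. -/
noncomputable def greedyRemainder : ℕ → ℝ
  | 0 => t
  | m + 1 =>
    open Classical in
    if m ∈ A ∧ f m < greedyRemainder m then greedyRemainder m - f m else greedyRemainder m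

def greedySet : Set ℕ := {m | m ∈ A ∧ f m < greedyRemainder A f t m}

theorem greedySet_subset : greedySet A f t ⊆ A := fun _ hm => hm.1

theorem greedyRemainder_succ (m : ℕ) :
    greedyRemainder A f t (m + 1) =
      greedyRemainder A f t m - (greedySet A f t).indicator f m := by
  by_cases hm : m ∈ greedySet A f t
  · rw [indicator_of_mem hm, greedyRemainder]; exact if_pos hm
  · rw [indicator_of_notMem hm, sub_zero, greedyRemainder]; exact if_neg hm

theorem greedyRemainder_eq_sub_sum (m : ℕ) :
    greedyRemainder A f t m = t - ∑ i ∈ Finset.range m, (greedySet A f t).indicator f i := by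
  induction m with
  | zero => simp [greedyRemainder]
  | succ m ih => rw [greedyRemainder_succ, ih, Finset.sum_range_succ]; ring

variable {t}

theorem greedyRemainder_pos (ht : 0 < t) (m : ℕ) : 0 < greedyRemainder A f t m := by
  induction m with
  | zero => exact ht
  | succ m ih =>
    rw [greedyRemainder_succ]
    by_cases hm : m ∈ greedySet A f t
    · rw [indicator_of_mem hm]
      exact sub_pos.2 hm.2
    · rwa [indicator_of_notMem hm, sub_zero]

variable {f}

theorem finite_diff_greedySet (hf : Tendsto f atTop (𝓝 0)) {ε : ℝ} (hε : 0 < ε)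
    (hrem : ∀ m, ε ≤ greedyRemainder A f t m) : (A \ greedySet A f t).Finite := by
  have hsmall : ∀ᶠ m in cofinite, f m < ε := by
    rw [Nat.cofinite_eq_atTop]
    exact hf.eventually_lt_const hε
  refine (eventually_cofinite.mp hsmall).subset fun m hm => ?_
  have hskip : greedyRemainder A f t m ≤ f m := not_lt.mp fun h => hm.2 ⟨hm.1, h⟩
  exact not_lt.mpr ((hrem m).trans hskip)

theorem exists_infinite_subset_hasSum_indicator (hf0 : 0 ≤ f) (hf : Tendsto f atTop (𝓝 0))
    (hA : ¬ Summable (A.indicator f)) (ht : 0 < t) :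
    ∃ B ⊆ A, B.Infinite ∧ HasSum (B.indicator f) t := by
  set B := greedySet A f t
  have hB0 : ∀ m, 0 ≤ B.indicator f m := fun m => indicator_nonneg (fun m _ => hf0 m) m
  have hpartial : ∀ m, ∑ i ∈ Finset.range m, B.indicator f i < t := fun m => by
    linarith [greedyRemainder_eq_sub_sum A f t m, greedyRemainder_pos A f ht m]
  obtain ⟨s, hs⟩ := summable_of_sum_range_le hB0 fun m => (hpartial m).le
  have hst : s ≤ t := le_of_tendsto' hs.tendsto_sum_nat fun m => (hpartial m).le
  obtain rfl : t = s := by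
    by_contra hne
    -- otherwise at least `t - s` is always left, so the greedy algorithm skips only finitely
    -- many elements of `A`, and `A` would have a finite sum
    have hskipped : (A \ B).Finite := by
      refine finite_diff_greedySet A hf (sub_pos.2 (hst.lt_of_ne' hne)) fun m => ?_
      rw [greedyRemainder_eq_sub_sum]
      linarith [sum_le_hasSum (Finset.range m) (fun i _ => hB0 i) hs]
    refine not_summable_indicator_diff hA (hskipped.subset inter_subset_right) ?_
    rw [sdiff_sdiff_cancel_left (greedySet_subset A f t)]
    exact ⟨s, hs⟩
  refine ⟨B, greedySet_subset A f t, fun hfin => ?_, hs⟩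
  obtain ⟨M, hM⟩ := hfin.bddAbove
  have hfinite_sum : HasSum (B.indicator f) (∑ i ∈ Finset.range (M + 1), B.indicator f i) :=
    hasSum_sum_of_ne_finset_zero fun i hi =>
      indicator_of_notMem (fun hiB => hi (Finset.mem_range.2 (Nat.lt_succ_of_le (hM hiB)))) f
  exact (hpartial (M + 1)).ne (hfinite_sum.unique hs)

end Greedy

section Stages

variable (next : ℕ → Set ℕ → Set ℕ)

def stageUnion : ℕ → Set ℕ
  | 0 => ∅
  | j + 1 => stageUnion j ∪ next j (stageUnion j)

theorem stageUnion_mono : Monotone (stageUnion next) :=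
  monotone_nat_of_le_succ fun _ => subset_union_left

theorem stage_subset_stageUnion_succ (j : ℕ) :
    next j (stageUnion next j) ⊆ stageUnion next (j + 1) :=
  subset_union_right

theorem stageUnion_subset_iUnion (j : ℕ) :
    stageUnion next j ⊆ ⋃ i, next i (stageUnion next i) := by
  induction j with
  | zero => exact empty_subset _
  | succ j ih => exact union_subset ih (subset_iUnion_of_subset j subset_rfl)

variable {next} {S : Set ℕ}
variable (hnew : ∀ j, next j (stageUnion next j) ⊆ S \ stageUnion next j)
include hnew

theorem pairwise_disjoint_stages :
    Pairwise (Disjoint on fun j => next j (stageUnion next j)) := by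
  have hlt : ∀ i j, i < j →
      Disjoint (next i (stageUnion next i)) (next j (stageUnion next j)) :=
    fun i j hij => disjoint_left.2 fun m hi hj =>
      (hnew j hj).2 (stageUnion_mono next hij (stage_subset_stageUnion_succ next i hi))
  intro i j hij
  rcases hij.lt_or_gt with h | h
  · exact hlt i j h
  · exact (hlt j i h).symm

theorem iUnion_stages_eq
    (hmin : ∀ j, sInf (S \ stageUnion next j) ∈ next j (stageUnion next j)) :
    ⋃ j, next j (stageUnion next j) = S := by
  have hcover : ∀ j, ∀ m ∈ S, m < j → m ∈ stageUnion next j := by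
    intro j
    induction j with
    | zero => exact fun m _ hm => absurd hm (Nat.not_lt_zero m)
    | succ j ih =>
      intro m hmS hmj
      by_cases hm : m ∈ stageUnion next j
      · exact stageUnion_mono next (Nat.le_succ j) hm
      -- `m` is the least number not covered by the first `j` stages
      have hle : sInf (S \ stageUnion next j) ≤ m := Nat.sInf_le ⟨hmS, hm⟩
      have hmin_new := hnew j (hmin j)
      have heq : sInf (S \ stageUnion next j) = m :=
        hle.antisymm (not_lt.mp fun hlt => hmin_new.2 (ih _ hmin_new.1 (by omega)))
      exact stage_subset_stageUnion_succ next j (heq ▸ hmin j)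
  refine subset_antisymm (iUnion_subset fun j => (hnew j).trans sdiff_subset) fun m hm => ?_
  exact stageUnion_subset_iUnion next (m + 1) (hcover (m + 1) m hm (Nat.lt_succ_self m))

end Stages

section Partition

variable {S : Set ℕ} {c : ℕ → ℕ} {f : ℕ → ℝ} {t : ℝ}

theorem exists_stage (hf0 : 0 ≤ f) (hf : Tendsto f atTop (𝓝 0)) (hS : ∀ m ∈ S, f m < t)
    {j : ℕ} (hc : ¬ Summable ((S ∩ c ⁻¹' {j}).indicator f)) {U : Set ℕ}
    (hU : (S ∩ c ⁻¹' {j} ∩ U).Finite) :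
    ∃ V ⊆ S \ U, V.Infinite ∧ HasSum (V.indicator f) t ∧ sInf (S \ U) ∈ V ∧
      V ⊆ insert (sInf (S \ U)) (c ⁻¹' {j}) := by
  have hfresh : ¬ Summable (((S ∩ c ⁻¹' {j}) \ U).indicator f) :=
    not_summable_indicator_diff hc hU
  have hne : (S \ U).Nonempty := by
    refine Nonempty.mono (sdiff_subset_sdiff_left (inter_subset_left (t := c ⁻¹' {j})))
      (nonempty_iff_ne_empty.2 fun hempty => hfresh ?_)
    simp [hempty]
  set m₀ := sInf (S \ U)
  have hm₀ : m₀ ∈ S \ U := Nat.sInf_mem hne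
  obtain ⟨B, hBsub, hBinf, hB⟩ := exists_infinite_subset_hasSum_indicator _ hf0 hf
    (not_summable_indicator_diff hfresh ((finite_singleton m₀).subset inter_subset_right))
    (sub_pos.2 (hS m₀ hm₀.1))
  have hm₀B : m₀ ∉ B := fun h => (hBsub h).2 rfl
  refine ⟨insert m₀ B, insert_subset hm₀ fun b hb => ?_, hBinf.mono (subset_insert _ _), ?_,
    mem_insert _ _, insert_subset_insert fun b hb => (hBsub hb).1.1.2⟩
  · exact ⟨(hBsub hb).1.1.1, (hBsub hb).1.2⟩
  · simpa using hB.indicator_insert hm₀B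

theorem exists_partition_hasSum_indicator (hf0 : 0 ≤ f) (hf : Tendsto f atTop (𝓝 0))
    (hS : ∀ m ∈ S, f m < t) (hc : ∀ j, ¬ Summable ((S ∩ c ⁻¹' {j}).indicator f)) :
    ∃ Y : ℕ → Set ℕ, (∀ j, (Y j).Infinite) ∧ Pairwise (Disjoint on Y) ∧ ⋃ j, Y j = S ∧
      ∀ j, HasSum ((Y j).indicator f) t := by
  choose! next hnew hinf hsum hmin hclass using
    fun j (U : Set ℕ) (hU : (S ∩ c ⁻¹' {j} ∩ U).Finite) =>
    exists_stage hf0 hf hS (hc j) hU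
  -- stage `j` meets the `i`-th class, `i ≠ j`, in at most one point
  have hused : ∀ j, ∀ i ≥ j, (S ∩ c ⁻¹' {i} ∩ stageUnion next j).Finite := by
    intro j
    induction j with
    | zero => simp [stageUnion]
    | succ j ih =>
      intro i hij
      rw [stageUnion, inter_union_distrib_left]
      refine (ih i (by omega)).union
        ((finite_singleton (sInf (S \ stageUnion next j))).subset ?_)
      rintro m ⟨⟨-, hmi⟩, hm⟩
      rcases hclass j _ (ih j le_rfl) hm with rfl | hmj
      · rfl
      · exact absurd (hmi.symm.trans hmj) (by omega)
  have hfin := fun j => hused j j le_rfl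
  exact ⟨fun j => next j (stageUnion next j), fun j => hinf j _ (hfin j),
    pairwise_disjoint_stages fun j => hnew j _ (hfin j),
    iUnion_stages_eq (fun j => hnew j _ (hfin j)) (fun j => hmin j _ (hfin j)),
    fun j => hsum j _ (hfin j)⟩

end Partition

theorem padicValNat_eq_of_natCast_eq_pow (p : ℕ) [hp : Fact p.Prime] {j m : ℕ}
    (hm : (m : ZMod (p ^ (j + 1))) = (p ^ j : ℕ)) : padicValNat p m = j := by
  rw [ZMod.natCast_eq_natCast_iff', Nat.mod_eq_of_lt (Nat.pow_lt_pow_succ hp.out.one_lt)] at hm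
  have hdecomp : m = p ^ j * (p * (m / p ^ (j + 1)) + 1) := by
    conv_lhs => rw [← Nat.div_add_mod m (p ^ (j + 1)), hm]
    ring
  have hndvd : ¬ p ∣ p * (m / p ^ (j + 1)) + 1 := fun h =>
    hp.out.one_lt.ne' (Nat.dvd_one.mp ((Nat.dvd_add_right (dvd_mul_right _ _)).mp h))
  rw [hdecomp, padicValNat.mul (pow_ne_zero _ hp.out.ne_zero) (by omega), padicValNat.prime_pow,
    padicValNat.eq_zero_of_not_dvd hndvd, add_zero]

theorem not_summable_indicator_padicValNat_eq (p : ℕ) [hp : Fact p.Prime] (j : ℕ) :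
    ¬ Summable ({m : ℕ | padicValNat p m = j}.indicator fun m : ℕ => (1 / m : ℝ)) := by
  intro h
  have hsub : {m : ℕ | (m : ZMod (p ^ (j + 1))) = (p ^ j : ℕ)} ⊆ {m | padicValNat p m = j} :=
    fun m hm => padicValNat_eq_of_natCast_eq_pow p hm
  have hres := h.indicator {m : ℕ | (m : ZMod (p ^ (j + 1))) = (p ^ j : ℕ)}
  rw [indicator_indicator, inter_eq_left.2 hsub] at hres
  exact Real.not_summable_indicator_one_div_natCast (pow_ne_zero _ hp.out.ne_zero) _ hres

theorem partition_into_infinite_sets_general (n d k : ℕ) (hn : 0 < n) (hd : 0 < d) (hk : 0 < k) :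
    ∃ Y : ℕ → Set ℕ,
      (∀ j, (Y j).Infinite) ∧
      (Pairwise fun i j => Disjoint (Y i) (Y j)) ∧
      (⋃ j, Y j) = {m : ℕ | 2 * k * d ≤ m} ∧
      ∀ j, HasSum (fun y : Y j => (1 : ℝ) / (y : ℕ)) ((n : ℝ) / d) := by
  have hsmall : ∀ m ∈ {m : ℕ | 2 * k * d ≤ m}, (1 : ℝ) / m < n / d := by
    intro m (hm : 2 * k * d ≤ m)
    have hdm : d < n * m := by nlinarith
    rw [div_lt_div_iff₀ (by exact_mod_cast Nat.pos_of_mul_pos_left (hd.trans hdm))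
      (by exact_mod_cast hd), one_mul]
    exact_mod_cast hdm
  have hdiverge : ∀ j, ¬ Summable (({m : ℕ | 2 * k * d ≤ m} ∩ padicValNat 2 ⁻¹' {j}).indicator
      fun m : ℕ => (1 / m : ℝ)) := fun j => by
    have hclass : {m : ℕ | 2 * k * d ≤ m} ∩ padicValNat 2 ⁻¹' {j} =
        {m | padicValNat 2 m = j} \ Iio (2 * k * d) := by
      ext m
      simp [and_comm]
    rw [hclass]
    exact not_summable_indicator_diff (not_summable_indicator_padicValNat_eq 2 j)
      ((finite_Iio _).subset inter_subset_right)
  obtain ⟨Y, hinf, hdisj, hcover, hsum⟩ := exists_partition_hasSum_indicator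
    (fun m => by positivity) tendsto_one_div_atTop_nhds_zero_nat hsmall hdiverge
  exact ⟨Y, hinf, hdisj, hcover, fun j => hasSum_subtype_iff_indicator.mpr (hsum j)⟩

theorem partition_into_infinite_sets (n d k : ℕ) (hn : 0 < n) (hd : 0 < d) (hk : 0 < k)
    (hcop : Nat.Coprime n d) :
    ∃ Y : ℕ → Set ℕ,
      (∀ j, (Y j).Infinite) ∧
      (Pairwise fun i j => Disjoint (Y i) (Y j)) ∧
      (⋃ j, Y j) = {m : ℕ | 2 * k * d ≤ m} ∧
      ∀ j, HasSum (fun y : Y j => (1 : ℝ) / (y : ℕ)) ((n : ℝ) / d) :=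
  partition_into_infinite_sets_general n d k hn hd hk
end

section
/- The set of all finite harmonic segment sums {Σ_{i=n}^{n+k} 1/i : n, k ∈ ℕ, n ≥ 1} is dense in the positive real numbers. -/
/-!
The segments starting at a fixed `m` grow without bound, since the harmonic series diverges,
while each added term is at most `1 / m`. Walking along them from `1 / m ≤ x`, the first
segment sum exceeding `x` therefore lies within `1 / m` of `x`, and `m` can be taken as large
as we like.
-/

open Finset Filter

theorem Filter.Tendsto.exists_mem_Ioc_of_sub_le {α : Type*} [AddCommGroup α]
    [LinearOrder α] [IsOrderedAddMonoid α] [NoMaxOrder α] {u : ℕ → α} {x δ : α}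
    (hu : Tendsto u atTop atTop) (hstep : ∀ k, u (k + 1) - u k ≤ δ) (h₀ : u 0 ≤ x) :
    ∃ k, u k ∈ Set.Ioc x (x + δ) := by
  classical
  have hex : ∃ k, x < u k := (hu.eventually_gt_atTop x).exists
  obtain ⟨k, hk⟩ : ∃ k, Nat.find hex = k + 1 :=
    Nat.exists_eq_add_one_of_ne_zero fun h => (h ▸ Nat.find_spec hex).not_ge h₀
  have hk_le : u k ≤ x := not_lt.1 (Nat.find_min hex (by omega))
  refine ⟨k + 1, hk ▸ Nat.find_spec hex, ?_⟩
  calc u (k + 1) = u k + (u (k + 1) - u k) := (add_sub_cancel _ _).symm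
    _ ≤ x + δ := add_le_add hk_le (hstep k)

theorem tendsto_sum_Icc_one_div_atTop (m : ℕ) :
    Tendsto (fun k => ∑ i ∈ Icc m (m + k), (1 : ℝ) / i) atTop atTop := by
  have hH : Tendsto (fun n => ∑ i ∈ range n, (1 : ℝ) / i) atTop atTop :=
    (not_summable_iff_tendsto_nat_atTop_of_nonneg fun i => by positivity).1
      Real.not_summable_one_div_natCast
  have hsplit : ∀ k, ∑ i ∈ Icc m (m + k), (1 : ℝ) / i
      = ∑ i ∈ range (m + k + 1), (1 : ℝ) / i - ∑ i ∈ range m, (1 : ℝ) / i := fun k => by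
    rw [← Ico_add_one_right_eq_Icc, sum_Ico_eq_sub _ (by omega)]
  simp_rw [hsplit]
  exact tendsto_atTop_add_const_right _ _
    (hH.comp (tendsto_atTop_mono (fun k => show k ≤ m + k + 1 by omega) tendsto_id))

theorem sum_Icc_add_one_sub_sum_Icc_one_div (m k : ℕ) :
    ∑ i ∈ Icc m (m + (k + 1)), (1 : ℝ) / i - ∑ i ∈ Icc m (m + k), (1 : ℝ) / i =
      1 / (m + k + 1 : ℕ) := by
  rw [← add_assoc, sum_Icc_succ_top (by omega), add_sub_cancel_left]

theorem harmonic_segments_dense (x : ℝ) (hx : 0 < x) :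
    x ∈ closure {r : ℝ | ∃ n k : ℕ, 0 < n ∧ r = ∑ i ∈ Finset.Icc n (n + k), (1 : ℝ) / i} := by
  refine Metric.mem_closure_iff.2 fun ε hε => ?_
  obtain ⟨n, hn⟩ := exists_nat_one_div_lt (lt_min hε hx)
  set m := n + 1
  have hm : (1 : ℝ) / m < min ε x := by simpa [m] using hn
  have hstep : ∀ k, ∑ i ∈ Icc m (m + (k + 1)), (1 : ℝ) / i
      - ∑ i ∈ Icc m (m + k), (1 : ℝ) / i ≤ 1 / m := fun k => by
    rw [sum_Icc_add_one_sub_sum_Icc_one_div]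
    gcongr
    omega
  have h₀ : ∑ i ∈ Icc m (m + 0), (1 : ℝ) / i ≤ x := by
    simpa using (hm.trans_le (min_le_right _ _)).le
  obtain ⟨k, hk_gt, hk_le⟩ :=
    (tendsto_sum_Icc_one_div_atTop m).exists_mem_Ioc_of_sub_le hstep h₀
  refine ⟨_, ⟨m, k, n.succ_pos, rfl⟩, ?_⟩
  rw [Real.dist_eq, abs_sub_comm, abs_of_pos (sub_pos.2 hk_gt)]
  linarith [min_le_left ε x]
end

section
/- For all positive integers m ≤ n with (m, n) ≠ (1, 1), the sum 1/m + 1/(m+1) + ⋯ + 1/n is not an integer. -/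
/-!
Let `j` be an element of `[m, n]` of largest 2-adic valuation `k`. It is unique: two odd
multiples `2 ^ k * a < 2 ^ k * b` of `2 ^ k` enclose the even multiple `2 ^ k * (a + 1)`.
So `1 / j` strictly dominates every other term 2-adically, and the sum has 2-adic norm `2 ^ k`.
If `m < n`, the interval contains an even number, so `k ≥ 1` and the sum is not a 2-adic
integer. If `m = n ≥ 2`, the sum `1 / m` lies strictly between `0` and `1`.
-/

open Finset

theorem Nat.exists_between_padicValNat_two_lt {i j : ℕ} (hi : i ≠ 0) (hij : i < j)
    (hv : padicValNat 2 i = padicValNat 2 j) :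
    ∃ x, i < x ∧ x < j ∧ padicValNat 2 i < padicValNat 2 x := by
  obtain ⟨k, a, ha, rfl⟩ := Nat.exists_eq_two_pow_mul_odd hi
  obtain ⟨l, b, hb, rfl⟩ := Nat.exists_eq_two_pow_mul_odd (by omega : j ≠ 0)
  have hval_odd {c : ℕ} (hc : Odd c) (e : ℕ) : padicValNat 2 (2 ^ e * c) = e := by
    rw [padicValNat_base_pow_mul one_lt_two hc.pos.ne',
      padicValNat.eq_zero_of_not_dvd hc.not_two_dvd_nat, zero_add]
  rw [hval_odd ha, hval_odd hb] at hv
  subst hv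
  have hab : a < b := Nat.lt_of_mul_lt_mul_left hij
  have hab' : a + 1 < b := by
    obtain ⟨a', rfl⟩ := ha; obtain ⟨b', rfl⟩ := hb; omega
  refine ⟨2 ^ k * (a + 1), by gcongr; omega, by gcongr, ?_⟩
  rw [hval_odd ha, padicValNat_base_pow_mul one_lt_two (by omega)]
  have := one_le_padicValNat_of_dvd (p := 2) (by omega) (ha.add_one).two_dvd
  omega

theorem padicValNat_two_lt_of_forall_le {m n i j : ℕ} (hm : 0 < m) (hi : i ∈ Icc m n)
    (hj : j ∈ Icc m n) (hij : i ≠ j) (hmax : ∀ x ∈ Icc m n, padicValNat 2 x ≤ padicValNat 2 j) :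
    padicValNat 2 i < padicValNat 2 j := by
  refine (hmax i hi).lt_of_ne fun hv => ?_
  simp only [mem_Icc] at hi hj
  rcases hij.lt_or_gt with hlt | hlt
  · obtain ⟨x, hix, hxj, hvx⟩ := Nat.exists_between_padicValNat_two_lt (by omega) hlt hv
    have := hmax x (mem_Icc.2 ⟨by omega, by omega⟩)
    omega
  · obtain ⟨x, hjx, hxi, hvx⟩ := Nat.exists_between_padicValNat_two_lt (by omega) hlt hv.symm
    have := hmax x (mem_Icc.2 ⟨by omega, by omega⟩)
    omega

theorem padicNorm_one_div_natCast {p : ℕ} [Fact p.Prime] {n : ℕ} (hn : n ≠ 0) :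
    padicNorm p (1 / n) = (p : ℚ) ^ padicValNat p n := by
  rw [padicNorm.eq_zpow_of_nonzero (by positivity), one_div, padicValRat.inv,
    padicValRat.of_nat, neg_neg, zpow_natCast]

theorem one_lt_padicNorm_two_sum_Icc {m n : ℕ} (hm : 0 < m) (hmn : m < n) :
    1 < padicNorm 2 (∑ i ∈ Icc m n, (1 : ℚ) / i) := by
  obtain ⟨j, hj, hmax⟩ := (Icc m n).exists_max_image (padicValNat 2) (nonempty_Icc.2 hmn.le)
  have hne_zero {i} (hi : i ∈ Icc m n) : i ≠ 0 := by simp only [mem_Icc] at hi; omega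
  have hnorm : padicNorm 2 (∑ i ∈ Icc m n, (1 : ℚ) / i) = 2 ^ padicValNat 2 j := by
    rw [IsNonarchimedean.apply_sum_eq_of_lt (fun _ _ => padicNorm.nonarchimedean)
      (fun q => (padicNorm.neg q).symm) hj, padicNorm_one_div_natCast (hne_zero hj)]
    · norm_num
    intro i hi hij
    rw [padicNorm_one_div_natCast (hne_zero hi), padicNorm_one_div_natCast (hne_zero hj)]
    exact pow_lt_pow_right₀ (by norm_num) (padicValNat_two_lt_of_forall_le hm hi hj hij hmax)
  have heven : 2 ∣ m ∨ 2 ∣ m + 1 := Nat.prime_two.dvd_mul.1 (Nat.even_mul_succ_self m).two_dvd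
  have hk : 1 ≤ padicValNat 2 j := by
    rcases heven with h | h
    · exact (one_le_padicValNat_of_dvd hm.ne' h).trans (hmax m (mem_Icc.2 ⟨le_rfl, hmn.le⟩))
    · exact (one_le_padicValNat_of_dvd (by omega) h).trans
        (hmax (m + 1) (mem_Icc.2 ⟨by omega, hmn⟩))
  rw [hnorm]
  exact one_lt_pow₀ (by norm_num) (by omega)

theorem kurschak (m n : ℕ) (hm : 0 < m) (hmn : m ≤ n) (h : (m, n) ≠ (1, 1)) :
    ¬ ∃ z : ℤ, (∑ i ∈ Finset.Icc m n, (1 : ℚ) / i) = z := by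
  rintro ⟨z, hz⟩
  rcases hmn.eq_or_lt with rfl | hmn
  · have hm : (1 : ℚ) < m := by exact_mod_cast (show 1 < m by grind)
    rw [Icc_self, sum_singleton] at hz
    have h0 : 0 < z := by exact_mod_cast hz ▸ (by positivity : (0 : ℚ) < 1 / m)
    have h1 : z < 1 := by exact_mod_cast hz ▸ (div_lt_one (by positivity)).2 hm
    omega
  · exact (padicNorm.of_int z).not_gt (hz ▸ one_lt_padicNorm_two_sum_Icc hm hmn)
end
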